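/- Let u² and v² be squares where v² is a proper prefix of u². Then the L-root interval r_{u²} of u² is not a substring of v², and moreover either r_{v²} is a prefix of r_{u²} (i.e., the occurrence of r_{v²} starts at the same position as the occurrence of r_{u²} and r_{v²} is a prefix of r_{u²} as a string), or the occurrence of r_{v²} ends strictly before the occurrence of r_{u²} starts. -/

import Mathlib

/-!
A suffix of a word that starts at an occurrence of a Lyndon word `λ` is lexicographically smaller
than the suffixes starting inside that occurrence, and than those starting inside a proper suffix
of `λ` placed right before it: `λ` is smaller than its proper suffixes at a genuine mismatch. If
the L-root run of `v²` reached past the start of the L-root run of `u²` without starting at the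
same place, each run would produce a suffix of `u²` smaller than one produced by the other. So the
runs start together, and the run of `v²` is the shorter one: a Lyndon word is unbordered, so `λᵤ`
does not occur inside a run of smaller period `|λᵥ| < |λᵤ|`, and for `|λᵥ| = |λᵤ|` this is a count.

That `r_{u²}` does not fit into `v²` is also a count: since `λᵤ` is unbordered, an occurrence of it
in `v²` would make `|λᵤ|` divide `|v|` as well as `|u|`, so that `v²` is at least `2|λᵤ|` shorter
than `u²`, whereas `r_{u²}` misses fewer than `2|λᵤ|` letters of `u²`.
-/

/-- A non-empty string is a Lyndon word if it is lexicographically smaller than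
all of its non-empty proper suffixes. -/
def IsLyndon {α : Type*} [LinearOrder α] (w : List α) : Prop :=
  w ≠ [] ∧ ∀ s : List α, s <:+ w → s ≠ [] → s ≠ w → List.Lex (· < ·) w s

/-- `listPow x k` is the `k`-th power `xᵏ` of the string `x`. -/
def listPow {α : Type*} (x : List α) (k : ℕ) : List α := (List.replicate k x).flatten

/-- `p` is a period of `w` (0-indexed): `1 ≤ p ≤ |w|` and `w[i] = w[i+p]` whenever
both are defined. -/
def IsPeriodOf {α : Type*} (w : List α) (p : ℕ) : Prop :=
  1 ≤ p ∧ p ≤ w.length ∧ ∀ i : ℕ, i + p < w.length → w[i]? = w[i + p]?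

/-- `p` is the smallest period of `w`. -/
def IsLeastPeriod {α : Type*} (w : List α) (p : ℕ) : Prop :=
  IsPeriodOf w p ∧ ∀ q : ℕ, IsPeriodOf w q → p ≤ q

section Words

variable {α : Type*}

theorem List.IsPrefix.length_lt {l₁ l₂ : List α} (h : l₁ <+: l₂) (hne : l₁ ≠ l₂) :
    l₁.length < l₂.length :=
  h.length_le.lt_of_ne fun hl => hne (h.eq_of_length hl)

theorem List.IsSuffix.length_lt {l₁ l₂ : List α} (h : l₁ <:+ l₂) (hne : l₁ ≠ l₂) :
    l₁.length < l₂.length :=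
  h.length_le.lt_of_ne fun hl => hne (h.eq_of_length hl)

theorem List.Lex.append_of_not_prefix {r : α → α → Prop} :
    ∀ {l₁ l₂ : List α}, List.Lex r l₁ l₂ → ¬ l₁ <+: l₂ → ∀ t₁ t₂,
      List.Lex r (l₁ ++ t₁) (l₂ ++ t₂)
  | _, _, .nil, h, _, _ => (h List.nil_prefix).elim
  | _, _, .rel hab, _, _, _ => .rel hab
  | _, _, .cons hl, h, _, _ =>
    .cons (append_of_not_prefix hl (fun hp => h ((List.prefix_cons_inj _).2 hp)) _ _)

theorem length_listPow (l : List α) (k : ℕ) : (listPow l k).length = k * l.length := by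
  simp [listPow, List.length_flatten]

theorem listPow_succ (l : List α) (k : ℕ) : listPow l (k + 1) = l ++ listPow l k := by
  simp [listPow, List.replicate_succ]

theorem listPow_add (l : List α) (m n : ℕ) : listPow l (m + n) = listPow l m ++ listPow l n := by
  simp only [listPow, List.replicate_add, List.flatten_append]

theorem prefix_listPow (l : List α) {k : ℕ} (hk : 0 < k) : l <+: listPow l k := by
  obtain ⟨k, rfl⟩ := Nat.exists_eq_add_of_lt hk
  rw [Nat.zero_add, listPow_succ]
  exact List.prefix_append _ _

theorem drop_eq_append_drop_of_eq_listPow {w x l y : List α} {k e : ℕ}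
    (hw : w = x ++ listPow l k ++ y) (he : e < k) :
    w.drop (x.length + e * l.length) = l ++ w.drop (x.length + e * l.length + l.length) := by
  obtain ⟨n, rfl⟩ := Nat.exists_eq_add_of_lt he
  have hlen : (x ++ listPow l e).length = x.length + e * l.length := by
    simp [length_listPow]
  have hdrop : w.drop (x.length + e * l.length) = l ++ (listPow l n ++ y) := by
    rw [hw, Nat.add_assoc, listPow_add, listPow_succ, ← hlen]
    simp
  rw [hdrop, ← List.drop_drop, hdrop, List.drop_left' rfl]

end Words

section Periods

variable {α : Type*}

theorem isPeriodOf_append_self {u : List α} (hu : u ≠ []) : IsPeriodOf (u ++ u) u.length := by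
  refine ⟨List.length_pos_iff.2 hu, by simp, fun i hi => ?_⟩
  simp only [List.length_append] at hi
  rw [List.getElem?_append_left (by omega), List.getElem?_append_right (by omega),
    Nat.add_sub_cancel]

theorem isPeriodOf_iff_hasPeriod {w : List α} {p : ℕ} :
    IsPeriodOf w p ↔ 1 ≤ p ∧ p ≤ w.length ∧ w.HasPeriod p := by
  rw [List.hasPeriod_iff_getElem?]
  exact and_congr_right' <| and_congr_right' <| forall_congr' fun i =>
    ⟨fun h hi => h (by omega), fun h hi => h (by omega)⟩

theorem IsPeriodOf.of_infix {w f : List α} {p : ℕ} (h : IsPeriodOf w p) (hf : f <:+: w)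
    (hp : p ≤ f.length) : IsPeriodOf f p :=
  isPeriodOf_iff_hasPeriod.2 ⟨h.1, hp, (isPeriodOf_iff_hasPeriod.1 h).2.2.infix hf⟩

theorem IsPeriodOf.drop_prefix {w : List α} {p : ℕ} (h : IsPeriodOf w p) : w.drop p <+: w :=
  (isPeriodOf_iff_hasPeriod.1 h).2.2.drop_prefix p

theorem IsPeriodOf.gcd {w : List α} {p q : ℕ} (hp : IsPeriodOf w p) (hq : IsPeriodOf w q)
    (hlen : p + q - Nat.gcd p q ≤ w.length) : IsPeriodOf w (Nat.gcd p q) :=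
  isPeriodOf_iff_hasPeriod.2 ⟨Nat.gcd_pos_of_pos_left _ hp.1,
    (Nat.gcd_le_left _ hp.1).trans hp.2.1,
    (isPeriodOf_iff_hasPeriod.1 hp).2.2.gcd (isPeriodOf_iff_hasPeriod.1 hq).2.2 hlen⟩

theorem IsPeriodOf.dvd_of_forall_le {w : List α} {p q : ℕ} (hp : IsPeriodOf w p)
    (hq : IsPeriodOf w q) (hlen : p + q ≤ w.length) (hmin : ∀ r, IsPeriodOf w r → p ≤ r) :
    p ∣ q := by
  have hgcd : Nat.gcd p q = p :=
    (Nat.gcd_le_left q hp.1).antisymm (hmin _ (hp.gcd hq (by omega)))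
  exact Nat.gcd_eq_left_iff_dvd.1 hgcd

theorem IsLeastPeriod.le_of_infix {z w : List α} {p q : ℕ} (hq : IsLeastPeriod z q)
    (hp : IsPeriodOf w p) (hz : z <:+: w) : q ≤ p := by
  by_cases h : p ≤ z.length
  · exact hq.2 _ (hp.of_infix hz h)
  · exact hq.1.2.1.trans (not_le.1 h).le

theorem pos_of_isLeastPeriod_append_self {u l x y : List α} {k : ℕ} (hu : u ≠ [])
    (hp : IsLeastPeriod (u ++ u) l.length) (hw : u ++ u = x ++ listPow l k ++ y)
    (hx : x.length < l.length) (hy : y.length < l.length) : 0 < k := by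
  have hlu := hp.2 _ (isPeriodOf_append_self hu)
  have hlen := congrArg List.length hw
  simp only [List.length_append, length_listPow] at hlen
  exact Nat.pos_of_ne_zero fun hk => by subst hk; omega

end Periods

section Lyndon

variable {α : Type*} [LinearOrder α] {l : List α}

theorem IsLyndon.lt_append (hl : IsLyndon l) {s : List α} (hs : s <:+ l) (hs0 : 0 < s.length)
    (hsl : s.length < l.length) (r r' : List α) : l ++ r < s ++ r' :=
  (hl.2 s hs (List.ne_nil_of_length_pos hs0) (fun h => by simp [h] at hsl)).append_of_not_prefix
    (fun hp => by have := hp.length_le; omega) r r'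

/-- Lyndon words are unbordered. -/
theorem IsLyndon.length_le_of_isPeriodOf (hl : IsLyndon l) {w : List α} {p : ℕ}
    (hlw : l <:+: w) (hp : IsPeriodOf w p) : l.length ≤ p := by
  by_contra! h
  have hlt : l < l.drop p := by
    simpa using hl.lt_append (List.drop_suffix p l) (by simp; omega) (by simp; have := hp.1; omega)
      [] []
  exact (hp.of_infix hlw h.le).drop_prefix.le hlt

theorem IsLyndon.drop_lt_drop_of_drop_eq (hl : IsLyndon l) {w r : List α} {a b : ℕ}
    (hd : w.drop a = l ++ r) (hab : a < b) (hb : b < a + l.length) : w.drop a < w.drop b := by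
  obtain ⟨c, rfl⟩ := Nat.exists_eq_add_of_lt hab
  rw [Nat.add_assoc, ← List.drop_drop, hd, List.drop_append_of_le_length (by omega)]
  exact hl.lt_append (List.drop_suffix _ _) (by simp; omega) (by simp; omega) r r

theorem IsLyndon.drop_length_lt_drop (hl : IsLyndon l) {w x y : List α} {k b : ℕ}
    (hx : x <:+ l) (hx_ne : x ≠ l) (hw : w = x ++ listPow l k ++ y) (hk : 0 < k)
    (hb : b < x.length) : w.drop x.length < w.drop b := by
  obtain ⟨k, rfl⟩ := Nat.exists_eq_add_of_lt hk
  rw [hw, Nat.zero_add, listPow_succ, List.append_assoc, List.drop_left' rfl,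
    List.drop_append_of_le_length hb.le, List.append_assoc]
  exact hl.lt_append ((List.drop_suffix b x).trans hx) (by simp; omega)
    (by simp; have := hx.length_lt hx_ne; omega) _ _

end Lyndon

section Squares

variable {α : Type*} [LinearOrder α]

theorem length_le_length_of_lyndon_runs {w lu lv xu xv yu yv : List α} {ku kv : ℕ}
    (hlu : IsLyndon lu) (hlv : IsLyndon lv) (hxu : xu <:+ lu) (hxu_ne : xu ≠ lu)
    (hu : w = xu ++ listPow lu ku ++ yu) (hv : w = xv ++ listPow lv kv ++ yv) (hku : 0 < ku)
    (hrun : xu.length < xv.length + kv * lv.length) : xu.length ≤ xv.length := by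
  by_contra! hts
  have hxul := hxu.length_lt hxu_ne
  have hQ := List.length_pos_iff.2 hlv.1
  have hdu : w.drop xu.length = lu ++ w.drop (xu.length + lu.length) := by
    simpa using drop_eq_append_drop_of_eq_listPow hu hku
  obtain ⟨e, c, hsplit, hc⟩ :
      ∃ e c, xu.length = xv.length + e * lv.length + c ∧ c < lv.length :=
    ⟨(xu.length - xv.length) / lv.length, (xu.length - xv.length) % lv.length,
      by have := Nat.div_add_mod' (xu.length - xv.length) lv.length; omega,
      Nat.mod_lt _ (by omega)⟩
  have hek : e < kv := Nat.lt_of_mul_lt_mul_right (a := lv.length) (by omega)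
  have hde := drop_eq_append_drop_of_eq_listPow hv hek
  rcases Nat.eq_zero_or_pos c with rfl | hc0
  · -- Both positions start a copy of `lv`, so compare one period further along.
    rw [Nat.add_zero] at hsplit
    obtain ⟨e, rfl⟩ : ∃ e', e = e' + 1 :=
      ⟨e - 1, by have : e ≠ 0 := (by rintro rfl; simp at hsplit; omega); omega⟩
    have hs : xv.length + e * lv.length + lv.length = xu.length := by
      rw [hsplit, Nat.add_one_mul, Nat.add_assoc]
    have hde' := drop_eq_append_drop_of_eq_listPow hv (e := e) (by omega)
    rw [hs] at hde'
    rw [← hsplit] at hde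
    have h1 : w.drop xu.length < w.drop (xu.length + lv.length) :=
      hlu.drop_lt_drop_of_drop_eq hdu (by omega) (by omega)
    have h2 : w.drop (xv.length + e * lv.length) < w.drop xu.length :=
      calc w.drop (xv.length + e * lv.length) = lv ++ w.drop xu.length := hde'
        _ < lv ++ w.drop (xu.length + lv.length) := List.append_left_lt h1
        _ = w.drop xu.length := hde.symm
    exact lt_asymm h2 (hlu.drop_length_lt_drop hxu hxu_ne hu hku (by omega))
  · exact lt_asymm (hlu.drop_length_lt_drop hxu hxu_ne hu hku (by omega))
      (hlv.drop_lt_drop_of_drop_eq hde (by omega) (by omega))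

theorem length_eq_length_of_lyndon_runs {w lu lv xu xv yu yv : List α} {ku kv : ℕ}
    (hlu : IsLyndon lu) (hlv : IsLyndon lv) (hxu : xu <:+ lu) (hxu_ne : xu ≠ lu)
    (hxv : xv <:+ lv) (hxv_ne : xv ≠ lv)
    (hu : w = xu ++ listPow lu ku ++ yu) (hv : w = xv ++ listPow lv kv ++ yv)
    (hku : 0 < ku) (hkv : 0 < kv) (hlen : lv.length ≤ lu.length)
    (hrun : xu.length < xv.length + kv * lv.length) : xv.length = xu.length := by
  refine le_antisymm (not_lt.1 fun hts => ?_)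
    (length_le_length_of_lyndon_runs hlu hlv hxu hxu_ne hu hv hku hrun)
  have hdu : w.drop xu.length = lu ++ w.drop (xu.length + lu.length) := by
    simpa using drop_eq_append_drop_of_eq_listPow hu hku
  have := hxv.length_lt hxv_ne
  exact lt_asymm (hlv.drop_length_lt_drop hxv hxv_ne hv hkv hts)
    (hlu.drop_lt_drop_of_drop_eq hdu hts (by omega))

theorem listPow_prefix_listPow {lu lv yu z : List α} {ku kv : ℕ} (hlu : IsLyndon lu)
    (hku : 0 < ku) (hyu : yu.length < lu.length) (hlen : lv.length ≤ lu.length)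
    (hz : listPow lv kv <:+: z) (hper : IsPeriodOf z lv.length)
    (h : listPow lv kv <+: listPow lu ku ++ yu) : listPow lv kv <+: listPow lu ku := by
  refine List.prefix_of_prefix_length_le h (List.prefix_append _ _) ?_
  rw [length_listPow, length_listPow]
  by_contra! hlt
  rcases hlen.lt_or_eq with hQP | hQP
  · have hP : lu.length ≤ ku * lu.length := Nat.le_mul_of_pos_left _ hku
    have hpre : lu <+: listPow lv kv :=
      List.prefix_of_prefix_length_le ((prefix_listPow lu hku).trans (List.prefix_append _ _)) h
        (by rw [length_listPow]; omega)
    exact absurd (hlu.length_le_of_isPeriodOf (hpre.isInfix.trans hz) hper) (not_le.2 hQP)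
  · rw [hQP] at hlt
    have hk : (ku + 1) * lu.length ≤ kv * lu.length :=
      Nat.mul_le_mul_right _ (Nat.lt_of_mul_lt_mul_right hlt)
    have := h.length_le
    rw [Nat.add_one_mul] at hk
    simp only [List.length_append, length_listPow, hQP] at this
    omega

theorem listPow_not_infix_of_isLeastPeriod {u v lu xu yu : List α} {ku : ℕ} (hv : v ≠ [])
    (hpref : v ++ v <+: u ++ u) (hvu : v.length < u.length) (hlu : IsLyndon lu)
    (hP : IsLeastPeriod (u ++ u) lu.length) (hdu : u ++ u = xu ++ listPow lu ku ++ yu)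
    (hxu : xu.length < lu.length) (hyu : yu.length < lu.length) (hku : 0 < ku) :
    ¬ listPow lu ku <:+: v ++ v := by
  intro h
  have hlz : lu <:+: v ++ v := (prefix_listPow lu hku).isInfix.trans h
  have hPv : lu.length ≤ v.length := hlu.length_le_of_isPeriodOf hlz (isPeriodOf_append_self hv)
  have hdvd_v : lu.length ∣ v.length :=
    (hP.1.of_infix hpref.isInfix (by simp; omega)).dvd_of_forall_le (isPeriodOf_append_self hv)
      (by simp; omega) fun r hr => hlu.length_le_of_isPeriodOf hlz hr
  have hdvd_u : lu.length ∣ u.length :=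
    hP.1.dvd_of_forall_le (isPeriodOf_append_self (List.ne_nil_of_length_pos (by omega)))
      (by simp; omega) hP.2
  have hgap : lu.length ≤ u.length - v.length :=
    Nat.le_of_dvd (by omega) (Nat.dvd_sub hdvd_u hdvd_v)
  have hlen_u := congrArg List.length hdu
  have hlen_v := h.length_le
  simp only [List.length_append, length_listPow] at hlen_u hlen_v
  omega

end Squares

/-- Let `u²` and `v²` be squares where `v²` is a proper prefix of `u²`.  The L-root
intervals are given by the decompositions `u² = xᵤ · λᵤ^kᵤ · yᵤ` and
`v² = xᵥ · λᵥ^kᵥ · yᵥ`, where `λᵤ, λᵥ` are Lyndon words whose lengths are the smallest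
periods of `u²` and `v²`, `xᵤ, xᵥ` are proper suffixes and `yᵤ, yᵥ` proper prefixes of
the respective L-roots.  Then `r_{u²} = λᵤ^kᵤ` is not a substring of `v²`, and either
`r_{v²} = λᵥ^kᵥ` starts at the same position as `r_{u²}` and is a prefix of it, or the
occurrence of `r_{v²}` ends strictly before the occurrence of `r_{u²}` starts. -/
theorem two_squares_lroots {α : Type*} [LinearOrder α]
    (u v : List α) (hune : u ≠ []) (hvne : v ≠ [])
    (hpref : v ++ v <+: u ++ u) (hproper : v ++ v ≠ u ++ u)
    (pu pv : ℕ) (hpu : IsLeastPeriod (u ++ u) pu) (hpv : IsLeastPeriod (v ++ v) pv)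
    (lu lv xu yu xv yv : List α) (ku kv : ℕ)
    (hluL : IsLyndon lu) (hlul : lu.length = pu)
    (hlvL : IsLyndon lv) (hlvl : lv.length = pv)
    (hxu : xu <:+ lu) (hxune : xu ≠ lu) (hyu : yu <+: lu) (hyune : yu ≠ lu)
    (hxv : xv <:+ lv) (hxvne : xv ≠ lv) (hyv : yv <+: lv) (hyvne : yv ≠ lv)
    (hdu : u ++ u = xu ++ listPow lu ku ++ yu)
    (hdv : v ++ v = xv ++ listPow lv kv ++ yv) :
    ¬ (listPow lu ku <:+: v ++ v) ∧
      ((xv.length = xu.length ∧ listPow lv kv <+: listPow lu ku) ∨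
        xv.length + (listPow lv kv).length ≤ xu.length) := by
  subst hlul hlvl
  have hxul := hxu.length_lt hxune
  have hyul := hyu.length_lt hyune
  have hvu : v.length < u.length := by
    have := hpref.length_lt hproper; simp only [List.length_append] at this; omega
  have hku := pos_of_isLeastPeriod_append_self hune hpu hdu hxul hyul
  have hkv := pos_of_isLeastPeriod_append_self hvne hpv hdv (hxv.length_lt hxvne)
    (hyv.length_lt hyvne)
  have hQP : lv.length ≤ lu.length := hpv.le_of_infix hpu.1 hpref.isInfix
  refine ⟨listPow_not_infix_of_isLeastPeriod hvne hpref hvu hluL hpu hdu hxul hyul hku, ?_⟩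
  rcases le_or_gt (xv.length + (listPow lv kv).length) xu.length with hbefore | hoverlap
  · exact Or.inr hbefore
  obtain ⟨rest, hrest⟩ := hpref
  have hw : u ++ u = xv ++ listPow lv kv ++ (yv ++ rest) := by
    rw [← hrest, hdv, List.append_assoc]
  have hts := length_eq_length_of_lyndon_runs hluL hlvL hxu hxune hxv hxvne hdu hw hku hkv hQP
    (by rwa [length_listPow] at hoverlap)
  refine Or.inl ⟨hts, listPow_prefix_listPow hluL hku hyul hQP ⟨xv, yv, hdv.symm⟩ hpv.1 ?_⟩
  have hdrop : (u ++ u).drop xu.length = listPow lu ku ++ yu := by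
    rw [hdu, List.append_assoc, List.drop_left' rfl]
  rw [← hdrop, hw, ← hts, List.append_assoc, List.drop_left' rfl]
  exact List.prefix_append _ _
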